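/- Fix an integer d ≥ 1, T > 0, and functions b, σ : {1,…,d} × ℝ → ℝ satisfying |b(i,x)−b(i,y)| + |σ(i,x)−σ(i,y)| ≤ K|x−y| for some K > 0 and all i, x, y. Fix φ ∈ ℍ_T and define Λ : 𝕄_T → [0,∞] by Λ(ν) = sup_λ [ ∫₀ᵀ λ(s) φ'(s) ds − ∫₀ᵀ λ(s) b̂(ν, φ(s))(s) ds − ∫₀ᵀ (λ(s)²/2) σ̂²(ν, φ(s))(s) ds ], where the supremum is over all step functions λ : [0,T] → ℝ of the form λ(t) = λ₀·1_{{0}}(t) + Σ_{j=0}^k λ_j·1_{(t_j, t_{j+1}]}(t) with 0 = t₀ < t₁ < … < t_{k+1} = T and λ₀,…,λ_k ∈ ℝ. Then Λ is lower semicontinuous on (𝕄_T, d_T). -/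

import Mathlib

open MeasureTheory

/-- A kernel on `[0,T] × {1,…,d}`. -/
def IsMKernel (d : ℕ) (T : ℝ) (K : ℝ → Fin d → ℝ) : Prop :=
  (∀ i : Fin d, Measurable fun s => K s i) ∧
    ∀ s ∈ Set.Icc (0:ℝ) T, (∀ i : Fin d, 0 ≤ K s i) ∧ ∑ i : Fin d, K s i = 1

/-- `lam` is a step function on `[0,T]` of the form
`λ(t) = λ₀ 1_{{0}}(t) + ∑_{j=0}^k λ_j 1_{(t_j,t_{j+1}]}(t)` for some partition
`0 = t₀ < t₁ < … < t_{k+1} = T`. -/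
def IsStepFun (T : ℝ) (lam : ℝ → ℝ) : Prop :=
  ∃ k : ℕ, ∃ t : Fin (k + 2) → ℝ, ∃ c : Fin (k + 1) → ℝ,
    StrictMono t ∧ t 0 = 0 ∧ t (Fin.last (k + 1)) = T ∧ lam 0 = c 0 ∧
    ∀ j : Fin (k + 1), ∀ s : ℝ, t j.castSucc < s → s ≤ t j.succ → lam s = c j

/-- The functional `F_λ(ν)`, expressed through the kernel `K` of `ν`. -/
noncomputable def Flam (d : ℕ) (T : ℝ) (b σ : Fin d → ℝ → ℝ) (φ φd : ℝ → ℝ)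
    (lam : ℝ → ℝ) (K : ℝ → Fin d → ℝ) : ℝ :=
  (∫ s in (0:ℝ)..T, lam s * φd s)
    - (∫ s in (0:ℝ)..T, lam s * ∑ i : Fin d, b i (φ s) * K s i)
    - ∫ s in (0:ℝ)..T, (lam s) ^ 2 / 2 * ∑ i : Fin d, (σ i (φ s)) ^ 2 * K s i

/-- `Λ(ν) = sup_λ F_λ(ν)`, the supremum over all step functions `λ` on `[0,T]`, as an
extended real number; expressed through the kernel `K` of `ν`. -/
noncomputable def Lambda (d : ℕ) (T : ℝ) (b σ : Fin d → ℝ → ℝ) (φ φd : ℝ → ℝ)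
    (K : ℝ → Fin d → ℝ) : EReal :=
  ⨆ lam : {lam : ℝ → ℝ // IsStepFun T lam},
    ((Flam d T b σ φ φd lam.1 K : ℝ) : EReal)


/-!
`Λ` is the supremum of the functionals `F_λ`, so it is enough that each `F_λ` depends
continuously on `ν`. Only the last two terms of `F_λ` depend on `ν`, and both have the form
`∑ᵢ ∫ λ g dνᵢ` with `g` continuous on `[0,T]` (since `b`, `σ` are Lipschitz and `φ` is a
primitive of an `L²` function). On each interval where `λ` is constant, replacing `g` by a step
function on a fine partition turns `∫ g dνᵢ` into a combination of increments of `νᵢ`, and these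
change by at most `2 d_T(μ, ν)` when `ν` is replaced by `μ`.
-/

open Set Filter Topology

theorem exists_partition_sub_le {a b η : ℝ} (hab : a ≤ b) (hη : 0 < η) :
    ∃ N : ℕ, ∃ u : ℕ → ℝ, Monotone u ∧ u 0 = a ∧ u N = b ∧ ∀ m, u (m + 1) - u m ≤ η := by
  obtain ⟨N, hN⟩ := exists_nat_gt ((b - a) / η)
  have hN0 : (0 : ℝ) < N := lt_of_le_of_lt (by have := sub_nonneg.2 hab; positivity) hN
  refine ⟨N, fun m => a + m * ((b - a) / N), fun m m' hm => ?_, by simp, ?_, fun m => ?_⟩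
  · dsimp only
    gcongr
  · field_simp; ring
  · rw [div_lt_iff₀ hη] at hN
    rw [show a + ((m + 1 : ℕ) : ℝ) * ((b - a) / N) - (a + m * ((b - a) / N)) = (b - a) / N by
      push_cast; ring, div_le_iff₀ hN0]
    linarith

theorem abs_integral_mul_le_of_abs_sub_le {p q ε : ℝ} {g f : ℝ → ℝ} (hpq : p ≤ q)
    (hg : ContinuousOn g (Icc p q)) (hf : IntegrableOn f (Icc p q))
    (hf1 : ∀ s ∈ Icc p q, |f s| ≤ 1) (hgε : ∀ s ∈ Icc p q, |g s - g p| ≤ ε) :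
    |∫ s in p..q, g s * f s| ≤ ε * (q - p) + |g p| * |∫ s in p..q, f s| := by
  rw [← uIcc_of_le hpq] at hg hf
  have hfi : IntervalIntegrable f volume p q := hf.intervalIntegrable
  have hsplit : ∫ s in p..q, g s * f s
      = (∫ s in p..q, (g s - g p) * f s) + g p * ∫ s in p..q, f s := by
    rw [← intervalIntegral.integral_const_mul, ← intervalIntegral.integral_add
      (hfi.continuousOn_mul (g := fun s => g s - g p) (hg.sub continuousOn_const))
      (hfi.const_mul _)]
    congr 1 with s
    ring
  have hosc : |∫ s in p..q, (g s - g p) * f s| ≤ ε * (q - p) := by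
    rw [← abs_of_nonneg (sub_nonneg.2 hpq)]
    refine (Real.norm_eq_abs _).symm.trans_le
      (intervalIntegral.norm_integral_le_of_norm_le_const fun s hs => ?_)
    have hs : s ∈ Icc p q := uIcc_of_le hpq ▸ uIoc_subset_uIcc hs
    rw [Real.norm_eq_abs, abs_mul]
    simpa using mul_le_mul (hgε s hs) (hf1 s hs) (abs_nonneg _) ((abs_nonneg _).trans (hgε s hs))
  rw [hsplit, ← abs_mul]
  exact (abs_add_le _ _).trans (add_le_add_left hosc _)

theorem abs_integral_le_of_partition {a b ε C : ℝ} {N : ℕ} {u : ℕ → ℝ} {F : ℝ → ℝ}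
    (hu0 : u 0 = a) (huN : u N = b) (hF : ∀ m < N, IntervalIntegrable F volume (u m) (u (m + 1)))
    (hbound : ∀ m < N, |∫ s in u m..u (m + 1), F s| ≤ ε * (u (m + 1) - u m) + C) :
    |∫ s in a..b, F s| ≤ ε * (b - a) + N * C := by
  calc |∫ s in a..b, F s|
      = |∑ m ∈ Finset.range N, ∫ s in u m..u (m + 1), F s| := by
        rw [intervalIntegral.sum_integral_adjacent_intervals hF, hu0, huN]
    _ ≤ ∑ m ∈ Finset.range N, (ε * (u (m + 1) - u m) + C) :=
        (Finset.abs_sum_le_sum_abs _ _).trans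
          (Finset.sum_le_sum fun m hm => hbound m (Finset.mem_range.1 hm))
    _ = ε * (b - a) + N * C := by
        rw [Finset.sum_add_distrib, ← Finset.mul_sum, Finset.sum_range_sub u, hu0, huN,
          Finset.sum_const, Finset.card_range, nsmul_eq_mul]

theorem ContinuousOn.eventually_abs_integral_mul_lt {a b ε : ℝ} {g : ℝ → ℝ} (hab : a ≤ b)
    (hg : ContinuousOn g (Icc a b)) (hε : 0 < ε) :
    ∀ᶠ δ in 𝓝[>] 0, ∀ f : ℝ → ℝ, IntegrableOn f (Icc a b) → (∀ s ∈ Icc a b, |f s| ≤ 1) →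
      (∀ r ∈ Icc a b, ∀ r' ∈ Icc a b, |∫ s in r..r', f s| ≤ δ) →
      |∫ s in a..b, g s * f s| < ε := by
  obtain ⟨M, hM⟩ := isCompact_Icc.exists_bound_of_continuousOn hg
  have hM0 : 0 ≤ M := (norm_nonneg _).trans (hM a ⟨le_rfl, hab⟩)
  set ε' := ε / (2 * (b - a + 1))
  obtain ⟨η, hη, hgη⟩ := Metric.uniformContinuousOn_iff_le.1
    (isCompact_Icc.uniformContinuousOn_of_continuous hg) ε'
    (by have := sub_nonneg.2 hab; positivity)
  obtain ⟨N, u, hu, hu0, huN, hmesh⟩ := exists_partition_sub_le hab hη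
  have hpiece : ∀ m < N, Icc (u m) (u (m + 1)) ⊆ Icc a b := fun m hm =>
    hu0 ▸ huN ▸ Icc_subset_Icc (hu (Nat.zero_le m)) (hu hm)
  filter_upwards [Ioo_mem_nhdsGT (show 0 < ε / (2 * (N * M + 1)) by positivity)]
    with δ ⟨hδ0, hδ⟩ f hf hf1 hfδ
  have hint : ∀ m < N, IntervalIntegrable (fun s => g s * f s) volume (u m) (u (m + 1)) := by
    intro m hm
    rw [intervalIntegrable_iff_integrableOn_Icc_of_le (hu m.le_succ)]
    exact (hf.continuousOn_mul hg isCompact_Icc).mono_set (hpiece m hm)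
  have hbound : ∀ m < N,
      |∫ s in u m..u (m + 1), g s * f s| ≤ ε' * (u (m + 1) - u m) + M * δ := by
    intro m hm
    have hsub := hpiece m hm
    have hum : u m ∈ Icc (u m) (u (m + 1)) := ⟨le_rfl, hu m.le_succ⟩
    refine (abs_integral_mul_le_of_abs_sub_le (ε := ε') (hu m.le_succ) (hg.mono hsub)
      (hf.mono_set hsub) (fun s hs => hf1 s (hsub hs)) fun s hs => ?_).trans ?_
    · rw [← Real.dist_eq]
      refine hgη s (hsub hs) (u m) (hsub hum) ?_
      rw [Real.dist_eq, abs_of_nonneg (sub_nonneg.2 hs.1)]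
      linarith [hmesh m, hs.2]
    · gcongr
      · exact Real.norm_eq_abs _ ▸ hM (u m) (hsub hum)
      · exact hfδ _ (hsub hum) _ (hsub ⟨hu m.le_succ, le_rfl⟩)
  have h1 : ε' * (b - a) < ε / 2 := by
    rw [div_mul_eq_mul_div, div_lt_div_iff₀ (by linarith) two_pos]
    nlinarith
  have h2 : N * (M * δ) < ε / 2 := by
    rw [lt_div_iff₀ (by positivity)] at hδ
    nlinarith [mul_nonneg (Nat.cast_nonneg N : (0:ℝ) ≤ N) hM0]
  linarith [abs_integral_le_of_partition hu0 huN hint hbound]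

theorem IsStepFun.exists_partition {T : ℝ} {lam : ℝ → ℝ} (h : IsStepFun T lam) :
    ∃ n : ℕ, ∃ u c : ℕ → ℝ, Monotone u ∧ u 0 = 0 ∧ u n = T ∧
      ∀ m < n, EqOn lam (fun _ => c m) (Ioc (u m) (u (m + 1))) := by
  obtain ⟨k, t, c, ht, ht0, htT, -, hc⟩ := h
  refine ⟨k + 1, fun m => t ⟨min m (k + 1), by omega⟩, fun m => c ⟨min m k, by omega⟩,
    fun m m' hm => ht.monotone (Fin.mk_le_mk.2 (min_le_min_right _ hm)), ht0, ?_, ?_⟩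
  · simpa [Fin.last] using htT
  · intro m hm s hs
    have := hc ⟨m, hm⟩ s
    simp_all [Fin.castSucc, Fin.succ, Nat.min_eq_left hm.le, Nat.min_eq_left (Nat.le_of_lt_succ hm)]

theorem IsStepFun.comp {T : ℝ} {lam : ℝ → ℝ} (h : IsStepFun T lam) (F : ℝ → ℝ) :
    IsStepFun T (fun s => F (lam s)) := by
  obtain ⟨k, t, c, ht, ht0, htT, hc0, hc⟩ := h
  exact ⟨k, t, fun j => F (c j), ht, ht0, htT, by simp only [hc0],
    fun j s h1 h2 => by simp only [hc j s h1 h2]⟩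

section StepPartition

variable {a b : ℝ} {n : ℕ} {u c : ℕ → ℝ} {lam H : ℝ → ℝ}

theorem intervalIntegrable_mul_of_eqOn_Ioc {p q r : ℝ} (hpq : p ≤ q)
    (hlam : EqOn lam (fun _ => r) (Ioc p q)) (hH : IntervalIntegrable H volume p q) :
    IntervalIntegrable (fun s => lam s * H s) volume p q :=
  (hH.const_mul r).congr fun s hs => by
    rw [uIoc_of_le hpq] at hs
    simp only [hlam hs]

theorem integral_mul_eq_of_eqOn_Ioc {p q r : ℝ} (hpq : p ≤ q)
    (hlam : EqOn lam (fun _ => r) (Ioc p q)) :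
    ∫ s in p..q, lam s * H s = r * ∫ s in p..q, H s := by
  rw [← intervalIntegral.integral_const_mul]
  refine intervalIntegral.integral_congr_ae (.of_forall fun s hs => ?_)
  rw [uIoc_of_le hpq] at hs
  simp only [hlam hs]

theorem Monotone.intervalIntegrable_of_integrableOn (hu : Monotone u) (hu0 : u 0 = a)
    (hun : u n = b) (hH : IntegrableOn H (Icc a b)) {m : ℕ} (hm : m < n) :
    IntervalIntegrable H volume (u m) (u (m + 1)) := by
  rw [intervalIntegrable_iff_integrableOn_Icc_of_le (hu m.le_succ)]
  exact hH.mono_set (hu0 ▸ hun ▸ Icc_subset_Icc (hu (Nat.zero_le m)) (hu hm))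

theorem intervalIntegrable_mul_of_forall_eqOn_Ioc (hu : Monotone u) (hu0 : u 0 = a)
    (hun : u n = b) (hlam : ∀ m < n, EqOn lam (fun _ => c m) (Ioc (u m) (u (m + 1))))
    (hH : IntegrableOn H (Icc a b)) :
    IntervalIntegrable (fun s => lam s * H s) volume a b :=
  hu0 ▸ hun ▸ IntervalIntegrable.trans_iterate fun m hm =>
    intervalIntegrable_mul_of_eqOn_Ioc (hu m.le_succ) (hlam m hm)
      (hu.intervalIntegrable_of_integrableOn hu0 hun hH hm)

theorem integral_mul_eq_sum_of_forall_eqOn_Ioc (hu : Monotone u) (hu0 : u 0 = a)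
    (hun : u n = b) (hlam : ∀ m < n, EqOn lam (fun _ => c m) (Ioc (u m) (u (m + 1))))
    (hH : IntegrableOn H (Icc a b)) :
    ∫ s in a..b, lam s * H s = ∑ m ∈ Finset.range n, c m * ∫ s in u m..u (m + 1), H s := by
  rw [← hu0, ← hun, ← intervalIntegral.sum_integral_adjacent_intervals fun m hm =>
    intervalIntegrable_mul_of_eqOn_Ioc (hu m.le_succ) (hlam m hm)
      (hu.intervalIntegrable_of_integrableOn hu0 hun hH hm)]
  exact Finset.sum_congr rfl fun m hm =>
    integral_mul_eq_of_eqOn_Ioc (hu m.le_succ) (hlam m (Finset.mem_range.1 hm))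

end StepPartition

namespace IsStepFun

variable {T : ℝ} {lam : ℝ → ℝ}

theorem intervalIntegrable_mul (h : IsStepFun T lam) {H : ℝ → ℝ}
    (hH : IntegrableOn H (Icc 0 T)) : IntervalIntegrable (fun s => lam s * H s) volume 0 T := by
  obtain ⟨n, u, c, hu, hu0, hun, hc⟩ := h.exists_partition
  exact intervalIntegrable_mul_of_forall_eqOn_Ioc hu hu0 hun hc hH

theorem eventually_abs_integral_mul_lt (h : IsStepFun T lam) {g : ℝ → ℝ}
    (hg : ContinuousOn g (Icc 0 T)) {ε : ℝ} (hε : 0 < ε) :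
    ∀ᶠ δ in 𝓝[>] 0, ∀ f : ℝ → ℝ, IntegrableOn f (Icc 0 T) → (∀ s ∈ Icc 0 T, |f s| ≤ 1) →
      (∀ r ∈ Icc 0 T, ∀ r' ∈ Icc 0 T, |∫ s in r..r', f s| ≤ δ) →
      |∫ s in 0..T, lam s * (g s * f s)| < ε := by
  obtain ⟨n, u, c, hu, hu0, hun, hc⟩ := h.exists_partition
  set S := ∑ m ∈ Finset.range n, |c m|
  have hS : 0 ≤ S := Finset.sum_nonneg fun m _ => abs_nonneg (c m)
  have hpiece : ∀ m ∈ Finset.range n, Icc (u m) (u (m + 1)) ⊆ Icc 0 T := fun m hm =>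
    hu0 ▸ hun ▸ Icc_subset_Icc (hu (Nat.zero_le m)) (hu (Finset.mem_range.1 hm))
  filter_upwards [(Filter.eventually_all_finset _).2 fun m hm =>
    (hg.mono (hpiece m hm)).eventually_abs_integral_mul_lt (hu m.le_succ)
      (show 0 < ε / (S + 1) by positivity)] with δ hδ f hf hf1 hfδ
  rw [integral_mul_eq_sum_of_forall_eqOn_Ioc hu hu0 hun hc (hf.continuousOn_mul hg isCompact_Icc)]
  calc |∑ m ∈ Finset.range n, c m * ∫ s in u m..u (m + 1), g s * f s|
      ≤ ∑ m ∈ Finset.range n, |c m| * (ε / (S + 1)) := by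
        refine (Finset.abs_sum_le_sum_abs _ _).trans (Finset.sum_le_sum fun m hm => ?_)
        have hsub := hpiece m hm
        rw [abs_mul]
        exact mul_le_mul_of_nonneg_left (hδ m hm f (hf.mono_set hsub) (fun s hs => hf1 s (hsub hs))
          fun r hr r' hr' => hfδ r (hsub hr) r' (hsub hr')).le (abs_nonneg _)
    _ = S * (ε / (S + 1)) := (Finset.sum_mul _ _ _).symm
    _ < ε := by
        rw [mul_div_assoc', div_lt_iff₀ (by positivity)]
        nlinarith

theorem eventually_abs_integral_mul_sum_sub_lt (h : IsStepFun T lam) {ι : Type*} [Fintype ι]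
    {g : ι → ℝ → ℝ} (hg : ∀ i, ContinuousOn (g i) (Icc 0 T)) {k : ℝ → ι → ℝ}
    (hk : ∀ i, IntegrableOn (fun s => k s i) (Icc 0 T)) {ε : ℝ} (hε : 0 < ε) :
    ∀ᶠ δ in 𝓝[>] 0, ∀ k' : ℝ → ι → ℝ, (∀ i, IntegrableOn (fun s => k' s i) (Icc 0 T)) →
      (∀ i, ∀ s ∈ Icc 0 T, |k' s i - k s i| ≤ 1) →
      (∀ i, ∀ r ∈ Icc 0 T, ∀ r' ∈ Icc 0 T, |∫ s in r..r', (k' s i - k s i)| ≤ δ) →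
      |(∫ s in 0..T, lam s * ∑ i, g i s * k' s i) - ∫ s in 0..T, lam s * ∑ i, g i s * k s i|
        < ε := by
  set ε' := ε / (Fintype.card ι + 1)
  filter_upwards [Filter.eventually_all.2 fun i =>
    h.eventually_abs_integral_mul_lt (hg i) (show 0 < ε' by positivity)] with δ hδ k' hk' hk1 hkδ
  have hint : ∀ k₀ : ℝ → ι → ℝ, (∀ i, IntegrableOn (fun s => k₀ s i) (Icc 0 T)) →
      IntervalIntegrable (fun s => lam s * ∑ i, g i s * k₀ s i) volume 0 T := fun k₀ hk₀ =>
    h.intervalIntegrable_mul (integrable_finsetSum _ fun i _ =>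
      (hk₀ i).continuousOn_mul (hg i) isCompact_Icc)
  have hdiff : ∀ i, IntegrableOn (fun s => k' s i - k s i) (Icc 0 T) := fun i =>
    (hk' i).sub (hk i)
  rw [← intervalIntegral.integral_sub (hint k' hk') (hint k hk)]
  simp only [← mul_sub, ← Finset.sum_sub_distrib, Finset.mul_sum]
  rw [intervalIntegral.integral_finsetSum fun i _ =>
    h.intervalIntegrable_mul ((hdiff i).continuousOn_mul (hg i) isCompact_Icc)]
  calc _ ≤ ∑ i, |∫ s in 0..T, lam s * (g i s * (k' s i - k s i))| := Finset.abs_sum_le_sum_abs _ _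
    _ ≤ ∑ _i : ι, ε' := Finset.sum_le_sum fun i _ =>
        (hδ i _ (hdiff i) (hk1 i) (hkδ i)).le
    _ < ε := by
        rw [Finset.sum_const, Finset.card_univ, nsmul_eq_mul, mul_div_assoc',
          div_lt_iff₀ (by positivity)]
        nlinarith

end IsStepFun

namespace IsMKernel

variable {d : ℕ} {T : ℝ} {K K' : ℝ → Fin d → ℝ}

theorem mem_Icc (hK : IsMKernel d T K) {s : ℝ} (hs : s ∈ Icc 0 T) (i : Fin d) :
    K s i ∈ Icc 0 1 :=
  ⟨(hK.2 s hs).1 i, (hK.2 s hs).2 ▸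
    Finset.single_le_sum (fun j _ => (hK.2 s hs).1 j) (Finset.mem_univ i)⟩

theorem abs_sub_le_one (hK' : IsMKernel d T K') (hK : IsMKernel d T K) {s : ℝ}
    (hs : s ∈ Icc 0 T) (i : Fin d) : |K' s i - K s i| ≤ 1 := by
  have h := hK.mem_Icc hs i
  have h' := hK'.mem_Icc hs i
  rw [abs_le]
  constructor <;> linarith [h.1, h.2, h'.1, h'.2]

theorem integrableOn (hK : IsMKernel d T K) (i : Fin d) :
    IntegrableOn (fun s => K s i) (Icc 0 T) :=
  Measure.integrableOn_of_bounded (M := 1) measure_Icc_lt_top.ne (hK.1 i).aestronglyMeasurable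
    ((ae_restrict_iff' measurableSet_Icc).2 (.of_forall fun s hs => by
      rw [Real.norm_eq_abs, abs_of_nonneg (hK.mem_Icc hs i).1]
      exact (hK.mem_Icc hs i).2))

theorem intervalIntegrable (hK : IsMKernel d T K) (i : Fin d) {x : ℝ} (hx : x ∈ Icc 0 T) :
    IntervalIntegrable (fun s => K s i) volume 0 x :=
  ((hK.integrableOn i).mono_set (uIcc_of_le hx.1 ▸ Icc_subset_Icc_right hx.2)).intervalIntegrable

end IsMKernel

theorem abs_integral_sub_le_two_mul_dist {d : ℕ} {T : ℝ} {K K' : ℝ → Fin d → ℝ}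
    {μ ν : C(Icc (0:ℝ) T, Fin d → ℝ)} (hK : IsMKernel d T K) (hK' : IsMKernel d T K')
    (hν : ∀ t : Icc (0:ℝ) T, ∀ i : Fin d, ν t i = ∫ s in (0:ℝ)..(t:ℝ), K s i)
    (hμ : ∀ t : Icc (0:ℝ) T, ∀ i : Fin d, μ t i = ∫ s in (0:ℝ)..(t:ℝ), K' s i)
    (i : Fin d) {r r' : ℝ} (hr : r ∈ Icc 0 T) (hr' : r' ∈ Icc 0 T) :
    |∫ s in r..r', (K' s i - K s i)| ≤ 2 * dist μ ν := by
  have hprim : ∀ x (hx : x ∈ Icc 0 T),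
      ∫ s in 0..x, (K' s i - K s i) = μ ⟨x, hx⟩ i - ν ⟨x, hx⟩ i := fun x hx => by
    rw [intervalIntegral.integral_sub (hK'.intervalIntegrable i hx) (hK.intervalIntegrable i hx),
      hμ, hν]
  have hdist : ∀ x (hx : x ∈ Icc 0 T), |μ ⟨x, hx⟩ i - ν ⟨x, hx⟩ i| ≤ dist μ ν := fun x hx => by
    rw [← Real.dist_eq]
    exact (dist_le_pi_dist _ _ i).trans (ContinuousMap.dist_apply_le_dist _)
  rw [← intervalIntegral.integral_interval_sub_left
    ((hK'.intervalIntegrable i hr').sub (hK.intervalIntegrable i hr'))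
    ((hK'.intervalIntegrable i hr).sub (hK.intervalIntegrable i hr)), hprim r' hr', hprim r hr]
  linarith [abs_sub (μ ⟨r', hr'⟩ i - ν ⟨r', hr'⟩ i) (μ ⟨r, hr⟩ i - ν ⟨r, hr⟩ i),
    hdist r hr, hdist r' hr']

theorem eventually_abs_Flam_sub_lt {d : ℕ} {T : ℝ} {b σ : Fin d → ℝ → ℝ} {φ φd lam : ℝ → ℝ}
    {K : ℝ → Fin d → ℝ} (hlam : IsStepFun T lam)
    (hb : ∀ i, ContinuousOn (fun s => b i (φ s)) (Icc 0 T))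
    (hσ : ∀ i, ContinuousOn (fun s => σ i (φ s)) (Icc 0 T)) (hK : IsMKernel d T K)
    {ε : ℝ} (hε : 0 < ε) :
    ∀ᶠ δ in 𝓝[>] 0, ∀ K' : ℝ → Fin d → ℝ, IsMKernel d T K' →
      (∀ i, ∀ r ∈ Icc 0 T, ∀ r' ∈ Icc 0 T, |∫ s in r..r', (K' s i - K s i)| ≤ δ) →
      |Flam d T b σ φ φd lam K' - Flam d T b σ φ φd lam K| < ε := by
  filter_upwards [hlam.eventually_abs_integral_mul_sum_sub_lt hb hK.integrableOn (half_pos hε),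
    (hlam.comp fun x => x ^ 2 / 2).eventually_abs_integral_mul_sum_sub_lt
      (g := fun i s => σ i (φ s) ^ 2) (fun i => (hσ i).pow 2) hK.integrableOn (half_pos hε)]
    with δ hB hS K' hK' hδ
  specialize hB K' hK'.integrableOn (fun i s hs => hK'.abs_sub_le_one hK hs i) hδ
  specialize hS K' hK'.integrableOn (fun i s hs => hK'.abs_sub_le_one hK hs i) hδ
  unfold Flam
  rw [abs_lt] at hB hS ⊢
  constructor <;> linarith

theorem Lambda_lowerSemicontinuous (d : ℕ) (T : ℝ) (hT : 0 < T)
    (b σ : Fin d → ℝ → ℝ) (C : ℝ)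
    (hlip : ∀ i : Fin d, ∀ x y : ℝ,
      |b i x - b i y| + |σ i x - σ i y| ≤ C * |x - y|)
    (φ φd : ℝ → ℝ)
    (hφ : φ 0 = 0 ∧ Measurable φd ∧
      IntegrableOn (fun s => (φd s) ^ 2) (Set.Icc (0:ℝ) T) ∧
      ∀ t ∈ Set.Icc (0:ℝ) T, φ t = ∫ s in (0:ℝ)..t, φd s) :
    ∀ ν : C(Set.Icc (0:ℝ) T, Fin d → ℝ), ∀ K : ℝ → Fin d → ℝ, IsMKernel d T K →
      (∀ t : Set.Icc (0:ℝ) T, ∀ i : Fin d, ν t i = ∫ s in (0:ℝ)..(t:ℝ), K s i) →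
      ∀ c : EReal, c < Lambda d T b σ φ φd K → ∃ δ : ℝ, 0 < δ ∧
        ∀ μ : C(Set.Icc (0:ℝ) T, Fin d → ℝ), ∀ K' : ℝ → Fin d → ℝ, IsMKernel d T K' →
          (∀ t : Set.Icc (0:ℝ) T, ∀ i : Fin d, μ t i = ∫ s in (0:ℝ)..(t:ℝ), K' s i) →
          dist μ ν < δ → c < Lambda d T b σ φ φd K' := by
  obtain ⟨-, hφd, hφd2, hφ⟩ := hφ
  have hφd_int : IntegrableOn φd (uIcc 0 T) := uIcc_of_le hT.le ▸
    ((memLp_two_iff_integrable_sq hφd.aestronglyMeasurable).2 hφd2).integrable one_le_two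
  have hφc : ContinuousOn φ (Icc 0 T) := uIcc_of_le hT.le ▸
    (intervalIntegral.continuousOn_primitive_interval hφd_int).congr (uIcc_of_le hT.le ▸ hφ)
  have hb : ∀ i, ContinuousOn (fun s => b i (φ s)) (Icc 0 T) := fun i =>
    (LipschitzWith.of_dist_le' (K := C) fun x y => by
      simp only [Real.dist_eq]
      linarith [hlip i x y, abs_nonneg (σ i x - σ i y)]).continuous.comp_continuousOn hφc
  have hσ : ∀ i, ContinuousOn (fun s => σ i (φ s)) (Icc 0 T) := fun i =>
    (LipschitzWith.of_dist_le' (K := C) fun x y => by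
      simp only [Real.dist_eq]
      linarith [hlip i x y, abs_nonneg (b i x - b i y)]).continuous.comp_continuousOn hφc
  intro ν K hK hν c hc
  obtain ⟨lam, hlam⟩ := lt_iSup_iff.1 hc
  obtain ⟨x, hcx, hxF⟩ := EReal.lt_iff_exists_real_btwn.1 hlam
  obtain ⟨δ, hF, hδ⟩ := ((eventually_abs_Flam_sub_lt (φd := φd) lam.2 hb hσ hK
    (sub_pos.2 (EReal.coe_lt_coe_iff.1 hxF))).and self_mem_nhdsWithin).exists
  refine ⟨δ / 2, half_pos hδ, fun μ K' hK' hμ hdist => ?_⟩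
  have hF' := hF K' hK' fun i r hr r' hr' =>
    (abs_integral_sub_le_two_mul_dist hK hK' hν hμ i hr hr').trans (by linarith)
  calc c < x := hcx
    _ < Flam d T b σ φ φd lam K' := EReal.coe_lt_coe_iff.2 (by linarith [abs_lt.1 hF'])
    _ ≤ Lambda d T b σ φ φd K' :=
      le_iSup (fun l : {lam : ℝ → ℝ // IsStepFun T lam} =>
        ((Flam d T b σ φ φd l.1 K' : ℝ) : EReal)) lam
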